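/- Let 1 ≤ q ≤ p ≤ n and let W_q, W_p be subspaces of ℂ^n with dim W_q = q and dim W_p = p such that pr_{q+1,p}(W_q) ⊆ W_p. Then for every k with 1 ≤ k ≤ q and all tuples L = (l_1,…,l_p), J = (j_1,…,j_q) with entries in {1,…,n}, the degenerate Plücker relation holds: ε · X_L(W_p) · X_J(W_q) = Σ X_{L'}(W_p) · X_{J'}(W_q), where ε = 1 if {j_1,…,j_k} ∩ {q+1,…,p} = ∅ and ε = 0 otherwise, the sum runs over all index tuples 1 ≤ r_1 < … < r_k ≤ p with {l_{r_1},…,l_{r_k}} ∩ {q+1,…,p} = ∅, J' = (l_{r_1},…,l_{r_k}, j_{k+1},…,j_q), and L' is obtained from L by replacing l_{r_i} with j_i for i = 1,…,k. -/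

import Mathlib

/-! Choose a matrix `C` with `pr_{q+1,p} (wq j) = ∑ s, C s j • wp s`. Multiplying the row of
`l`-th coordinates of the `wp` by `C` gives the row of `l`-th coordinates of the `wq` when
`l ∉ {q+1, …, p}`, and zero otherwise. Hence `G y`, the determinant of the `X_J`-matrix of the
`wq` with its first `k` rows replaced by the `y i ᵥ* C`, is an alternating `k`-form in rows of
length `p` through which both sides of the relation are expressed: with `A` the `X_L`-matrix of
the `wp` and `U` the rows of their `j_1, …, j_k`-th coordinates, the relation is the generalized
Cramer rule
`det A • G U = ∑_{r strictly monotone} det (A with rows r i replaced by U i) • G (A ∘ r)`.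
For invertible `A`, write `U = B * A` and expand `G` multilinearly; in general, perturb `A` to
`A + t • 1` and let `t → 0`. -/

attribute [local instance] Classical.propDecidable

/-- The projection `pr_{a,b} : ℂⁿ → ℂⁿ` setting the (1-based) coordinates
`a, …, b` to zero; if `a > b` it is the identity. -/
noncomputable def pr (n a b : ℕ) : (Fin n → ℂ) →ₗ[ℂ] (Fin n → ℂ) :=
  LinearMap.pi fun i : Fin n =>
    if a ≤ (i : ℕ) + 1 ∧ (i : ℕ) + 1 ≤ b then 0 else LinearMap.proj i

/-- The `m`-th (1-based) coordinate of a vector `x ∈ ℂⁿ` (zero if `m` is out of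
range). -/
noncomputable def coord {n : ℕ} (m : ℕ) (x : Fin n → ℂ) : ℂ :=
  if h : 1 ≤ m ∧ m ≤ n then x ⟨m - 1, by omega⟩ else 0

/-- The Plücker coordinate `X_J` of the tuple `w_1, …, w_d` of vectors of `ℂⁿ`
with respect to the index tuple `J = (j_1, …, j_d)` (1-based entries): the
determinant of the `d × d` matrix whose `(s, t)` entry is the `j_s`-th
coordinate of `w_t`. -/
noncomputable def pluck {n d : ℕ} (w : Fin d → (Fin n → ℂ)) (J : Fin d → ℕ) : ℂ :=
  Matrix.det (Matrix.of fun s t : Fin d => coord (J s) (w t))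

/-- The degenerate Plücker relation `R^{k;a}_{L,J}` evaluated on the pair of
subspaces with bases `wp` (of dimension `p`) and `wq` (of dimension `q`):
`ε · X_L · X_J = Σ X_{L'} · X_{J'}`, where `ε = 1` iff
`{j_1, …, j_k} ∩ {q+1, …, p} = ∅`, the sum runs over strictly increasing tuples
`1 ≤ r_1 < … < r_k ≤ p` with `{l_{r_1}, …, l_{r_k}} ∩ {q+1, …, p} = ∅`,
`J' = (l_{r_1}, …, l_{r_k}, j_{k+1}, …, j_q)` and `L'` is obtained from `L` by
replacing `l_{r_i}` with `j_i` for `i = 1, …, k`. -/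
noncomputable def DegRel (n p q k : ℕ) (hk : k ≤ q)
    (wp : Fin p → (Fin n → ℂ)) (wq : Fin q → (Fin n → ℂ))
    (L : Fin p → ℕ) (J : Fin q → ℕ) : Prop :=
  (if ∀ i : Fin k, J (Fin.castLE hk i) ∉ Finset.Icc (q + 1) p then (1 : ℂ) else 0)
      * pluck wp L * pluck wq J =
    ∑ r : Fin k → Fin p,
      if StrictMono r ∧ ∀ i, L (r i) ∉ Finset.Icc (q + 1) p then
        pluck wp (fun s => if h : ∃ i, r i = s then J (Fin.castLE hk h.choose) else L s)
          * pluck wq (fun t => if h : (t : ℕ) < k then L (r ⟨(t : ℕ), h⟩) else J t)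
      else 0

open Function Matrix Finset

section StrictMonoPerm

variable {k : ℕ} {ι : Type*} [LinearOrder ι]

theorem StrictMono.eq_and_eq_of_comp_perm_eq {r r' : Fin k → ι} {σ σ' : Equiv.Perm (Fin k)}
    (hr : StrictMono r) (hr' : StrictMono r') (h : r ∘ σ = r' ∘ σ') : r = r' ∧ σ = σ' := by
  have hrange : Set.range r = Set.range r' := by
    rw [← σ.surjective.range_comp r, ← σ'.surjective.range_comp r', h]
  obtain rfl := (hr.range_inj hr').mp hrange
  exact ⟨rfl, Equiv.ext fun i => hr.injective (congrFun h i)⟩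

theorem Finset.sum_injective_eq_sum_strictMono_perm [Fintype ι] {N : Type*} [AddCommMonoid N]
    (F : (Fin k → ι) → N) :
    ∑ f ∈ univ.filter Injective, F f =
      ∑ r ∈ univ.filter StrictMono, ∑ σ : Equiv.Perm (Fin k), F (r ∘ σ) := by
  rw [← sum_product']
  refine sum_nbij' (fun f => (f ∘ Tuple.sort f, (Tuple.sort f)⁻¹)) (fun x => x.1 ∘ x.2)
    ?_ ?_ ?_ ?_ ?_
  · intro f hf
    simp only [mem_filter, mem_univ, true_and, mem_product, and_true] at hf ⊢
    exact (Tuple.monotone_sort f).strictMono_of_injective (hf.comp (Tuple.sort f).injective)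
  · rintro ⟨r, σ⟩ h
    simp only [mem_filter, mem_univ, true_and, mem_product, and_true] at h
    simpa using h.injective.comp σ.injective
  · intro f _
    ext i
    simp
  · rintro ⟨r, σ⟩ h
    simp only [mem_filter, mem_univ, true_and, mem_product, and_true] at h
    have hsorted : StrictMono (r ∘ σ ∘ Tuple.sort (r ∘ σ)) :=
      (Tuple.monotone_sort (r ∘ σ)).strictMono_of_injective
        ((h.injective.comp σ.injective).comp (Tuple.sort _).injective)
    obtain ⟨hr, hσ⟩ := hsorted.eq_and_eq_of_comp_perm_eq (σ := 1)
      (σ' := σ * Tuple.sort (r ∘ σ)) h rfl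
    exact Prod.ext hr (eq_inv_of_mul_eq_one_left hσ.symm).symm
  · intro f _
    simp [comp_assoc]

theorem StrictMono.exists_apply_notMem_range [Fintype ι] {r r' : Fin k → ι}
    (hr : StrictMono r) (hr' : StrictMono r') (hne : r' ≠ r) : ∃ i, r' i ∉ Set.range r := by
  by_contra! hsub
  have himage : univ.image r' = univ.image r :=
    eq_of_subset_of_card_le (fun s hs => by
      obtain ⟨i, -, rfl⟩ := mem_image.mp hs
      obtain ⟨j, hj⟩ := hsub i
      exact mem_image.mpr ⟨j, mem_univ j, hj⟩)
      (by rw [card_image_of_injective _ hr.injective, card_image_of_injective _ hr'.injective])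
  refine hne ((hr'.range_inj hr).mp ?_)
  simpa [Set.image_univ] using congrArg ((↑) : Finset ι → Set ι) himage

end StrictMonoPerm

theorem Function.Injective.extend_update {α β γ : Type*} [DecidableEq α] [DecidableEq β]
    {f : α → β} (hf : Injective f) (g : α → γ) (e : β → γ) (a : α) (c : γ) :
    extend f (update g a c) e = update (extend f g e) (f a) c := by
  ext b
  by_cases hb : ∃ a', f a' = b
  · obtain ⟨a', rfl⟩ := hb
    simp only [hf.extend_apply, update_apply, hf.eq_iff]
  · have hne : b ≠ f a := fun h => hb ⟨a, h.symm⟩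
    rw [extend_apply' _ _ _ hb, update_of_ne hne, extend_apply' _ _ _ hb]

theorem Function.Injective.extend_comp_self {α β γ : Type*} {f : α → β} (hf : Injective f)
    (e : β → γ) : extend f (fun a => e (f a)) e = e := by
  ext b
  by_cases hb : ∃ a, f a = b
  · obtain ⟨a, rfl⟩ := hb
    exact hf.extend_apply _ _ a
  · exact extend_apply' _ _ _ hb

namespace AlternatingMap

variable {R M N : Type*} [CommRing R] [AddCommGroup M] [Module R M] [AddCommGroup N] [Module R N]

noncomputable def compExtend {ι κ : Type*} (F : M [⋀^ι]→ₗ[R] N) {r : κ → ι} (hr : Injective r)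
    (x : ι → M) : M [⋀^κ]→ₗ[R] N where
  toFun y := F (extend r y x)
  map_update_add' y i a b := by
    classical
    simp only [hr.extend_update, F.map_update_add]
  map_update_smul' y i c a := by
    classical
    simp only [hr.extend_update, F.map_update_smul]
  map_eq_zero_of_eq' y i j hy hij :=
    F.map_eq_zero_of_eq _ (by simpa only [hr.extend_apply] using hy) (hr.ne hij)

theorem map_sum_smul_eq_sum_strictMono {k : ℕ} {ι : Type*} [Fintype ι] [LinearOrder ι]
    (G : M [⋀^Fin k]→ₗ[R] N) (v : ι → M) (a : Fin k → ι → R) :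
    G (fun i => ∑ s, a i s • v s) =
      ∑ r : Fin k → ι, if StrictMono r then det (of fun i j => a i (r j)) • G (v ∘ r) else 0 := by
  have hexpand : G (fun i => ∑ s, a i s • v s) = ∑ f, (∏ i, a i (f i)) • G (v ∘ f) := by
    refine (G.toMultilinearMap.map_sum fun i s => a i s • v s).trans ?_
    exact sum_congr rfl fun f _ => G.map_smul_univ (fun i => a i (f i)) (v ∘ f)
  have hinjective : ∑ f, (∏ i, a i (f i)) • G (v ∘ f) =
      ∑ f ∈ univ.filter Injective, (∏ i, a i (f i)) • G (v ∘ f) := by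
    refine (sum_filter_of_ne fun f _ hf => ?_).symm
    by_contra hf'
    obtain ⟨i, j, hfij, hij⟩ := not_injective_iff.mp hf'
    exact hf (by rw [G.map_eq_zero_of_eq (v ∘ f) (congrArg v hfij) hij, smul_zero])
  have hperm (r : Fin k → ι) :
      ∑ σ : Equiv.Perm (Fin k), (∏ i, a i ((r ∘ σ) i)) • G (v ∘ (r ∘ σ)) =
        det (of fun i j => a i (r j)) • G (v ∘ r) := by
    rw [← det_transpose, det_apply, sum_smul]
    refine sum_congr rfl fun σ _ => ?_
    rw [← comp_assoc, G.map_perm, smul_comm, smul_assoc]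
    simp [Units.smul_def]
  rw [hexpand, hinjective, sum_injective_eq_sum_strictMono_perm, ← sum_filter]
  exact sum_congr rfl fun r _ => hperm r

end AlternatingMap

namespace Matrix

variable {l m n α : Type*}

noncomputable def updateRows (A : Matrix m n α) (r : l → m) (U : l → n → α) : Matrix m n α :=
  of (extend r U A)

theorem updateRows_self (A : Matrix m n α) {r : l → m} (hr : Injective r) (U : l → n → α)
    (i : l) : A.updateRows r U (r i) = U i :=
  hr.extend_apply _ _ i

theorem updateRows_of_notMem_range (A : Matrix m n α) (r : l → m) (U : l → n → α) {s : m}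
    (hs : s ∉ Set.range r) : A.updateRows r U s = A s :=
  extend_apply' _ _ _ hs

theorem updateRows_comp_self (A : Matrix m n α) {r : l → m} (hr : Injective r) :
    A.updateRows r (fun i => A (r i)) = A :=
  hr.extend_comp_self A

variable {R : Type*} [CommRing R]

theorem detRowAlternating_compExtend_apply [Fintype m] [DecidableEq m] (A : Matrix m m R)
    {r : l → m} (hr : Injective r) (U : l → m → R) :
    detRowAlternating.compExtend hr A U = det (A.updateRows r U) := rfl

variable {k : ℕ} {ι : Type*} [Fintype ι] [DecidableEq ι] [LinearOrder ι]

theorem det_updateRows_comp_eq_zero (A : Matrix ι ι R) {r r' : Fin k → ι}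
    (hr : StrictMono r) (hr' : StrictMono r') (hne : r' ≠ r) :
    det (A.updateRows r fun i => A (r' i)) = 0 := by
  obtain ⟨i, hi⟩ := hr.exists_apply_notMem_range hr' hne
  refine det_zero_of_row_eq (i := r i) (j := r' i) (fun h => hi ⟨i, h⟩) ?_
  rw [updateRows_self _ hr.injective, updateRows_of_notMem_range _ _ _ hi]

theorem det_updateRows_mul_self (A : Matrix ι ι R) (B : Matrix (Fin k) ι R) {r : Fin k → ι}
    (hr : StrictMono r) :
    det (A.updateRows r (B * A)) = det (of fun i j => B i (r j)) * det A := by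
  have hBA : B * A = fun i => ∑ s, B i s • A s := by
    funext i
    rw [mul_apply_eq_vecMul, vecMul_eq_sum]
  have hexpand := (detRowAlternating.compExtend hr.injective A).map_sum_smul_eq_sum_strictMono
    (fun s => A s) B
  simp only [detRowAlternating_compExtend_apply] at hexpand
  rw [hBA, hexpand, sum_eq_single r]
  · rw [if_pos hr, smul_eq_mul]
    congr 2
    exact updateRows_comp_self A hr.injective
  · intro r' _ hne
    split_ifs with hr'
    · exact smul_eq_zero_of_right _ (det_updateRows_comp_eq_zero A hr hr' hne)
    · rfl
  · exact fun h => absurd (mem_univ r) h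

end Matrix

theorem Continuous.matrix_updateRows {X l m n α : Type*} [TopologicalSpace X]
    [TopologicalSpace α] {A : X → Matrix m n α} (hA : Continuous A) (r : l → m)
    {U : X → l → n → α} (hU : Continuous U) :
    Continuous fun x => (A x).updateRows r (U x) := by
  refine continuous_matrix fun s j => ?_
  by_cases h : ∃ i, r i = s
  · simp only [Matrix.updateRows, Matrix.of_apply, extend, dif_pos h]
    fun_prop
  · simp only [Matrix.updateRows, Matrix.of_apply, extend, dif_neg h]
    exact hA.matrix_elem s j

namespace AlternatingMap

open Matrix

variable {k : ℕ} {ι : Type*} [Fintype ι] [DecidableEq ι] [LinearOrder ι]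

theorem det_smul_apply_eq_sum_updateRows_of_isUnit {R N : Type*} [CommRing R] [AddCommGroup N]
    [Module R N] (G : (ι → R) [⋀^Fin k]→ₗ[R] N) {A : Matrix ι ι R} (hA : IsUnit A.det)
    (U : Fin k → ι → R) :
    A.det • G U =
      ∑ r : Fin k → ι,
        if StrictMono r then det (A.updateRows r U) • G (fun i => A (r i)) else 0 := by
  set B := of U * A⁻¹
  have hBA : B * A = of U := by rw [Matrix.mul_assoc, nonsing_inv_mul _ hA, Matrix.mul_one]
  have hU : U = fun i => ∑ s, B i s • A s := by
    funext i
    rw [← vecMul_eq_sum, ← mul_apply_eq_vecMul, hBA]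
    rfl
  conv_lhs => rw [hU]
  refine (congrArg (A.det • ·) (G.map_sum_smul_eq_sum_strictMono (fun s => A s) B)).trans ?_
  rw [smul_sum]
  refine sum_congr rfl fun r _ => ?_
  split_ifs with hr
  · rw [smul_smul, mul_comm, ← det_updateRows_mul_self A B hr, hBA]
    rfl
  · exact smul_zero _

theorem det_smul_apply_eq_sum_updateRows {𝕜 N : Type*} [NontriviallyNormedField 𝕜]
    [CompleteSpace 𝕜] [AddCommGroup N] [Module 𝕜 N] [TopologicalSpace N] [T2Space N]
    [ContinuousAdd N] [ContinuousSMul 𝕜 N] (G : (ι → 𝕜) [⋀^Fin k]→ₗ[𝕜] N) (hG : Continuous G)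
    (A : Matrix ι ι 𝕜) (U : Fin k → ι → 𝕜) :
    A.det • G U =
      ∑ r : Fin k → ι,
        if StrictMono r then det (A.updateRows r U) • G (fun i => A (r i)) else 0 := by
  have hshift : Continuous fun t : 𝕜 => A + t • (1 : Matrix ι ι 𝕜) := by fun_prop
  have hunit : {t | (charpoly (-A)).IsRoot t}ᶜ ⊆ {t | IsUnit (A + t • 1).det} := by
    intro t (ht : ¬ (charpoly (-A)).IsRoot t)
    rw [Polynomial.IsRoot.def, eval_charpoly, sub_neg_eq_add, add_comm, scalar_apply,
      ← smul_one_eq_diagonal] at ht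
    exact isUnit_iff_ne_zero.mpr ht
  have hdense : Dense {t | IsUnit (A + t • 1).det} :=
    ((Polynomial.finite_setOfPred_isRoot (charpoly_monic (-A)).ne_zero).countable.dense_compl
      𝕜).mono hunit
  have hext := Continuous.ext_on hdense (hshift.matrix_det.smul continuous_const)
    (continuous_finsetSum _ fun r _ => ?_)
    fun t ht => det_smul_apply_eq_sum_updateRows_of_isUnit G ht U
  · simpa using congrFun hext 0
  · split_ifs
    · exact (hshift.matrix_updateRows r continuous_const).matrix_det.smul
        (hG.comp (continuous_pi fun i => continuous_pi fun j => hshift.matrix_elem (r i) j))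
    · exact continuous_const

end AlternatingMap

theorem Fin.extend_castLE {α : Type*} {k q : ℕ} (hk : k ≤ q) (g : Fin k → α) (e : Fin q → α) :
    extend (Fin.castLE hk) g e = fun t : Fin q => if h : (t : ℕ) < k then g ⟨t, h⟩ else e t := by
  funext t
  split_ifs with h
  · exact (Fin.castLE_injective hk).extend_apply g e ⟨t, h⟩
  · exact extend_apply' _ _ _ fun ⟨i, hi⟩ => h (hi ▸ i.isLt)

theorem Submodule.exists_sum_smul_eq_of_map_span_le {K V ι κ : Type*} [CommRing K]
    [AddCommGroup V] [Module K V] [Fintype ι] (f : V →ₗ[K] V) {u : κ → V} {v : ι → V}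
    (h : (span K (Set.range u)).map f ≤ span K (Set.range v)) :
    ∃ C : Matrix ι κ K, ∀ j, ∑ s, C s j • v s = f (u j) := by
  choose c hc using fun j => (mem_span_range_iff_exists_fun K).mp
    (h ⟨u j, subset_span ⟨j, rfl⟩, rfl⟩)
  exact ⟨of fun s j => c j s, hc⟩

theorem coord_sum_smul {n d : ℕ} (m : ℕ) (c : Fin d → ℂ) (x : Fin d → Fin n → ℂ) :
    coord m (∑ s, c s • x s) = ∑ s, c s * coord m (x s) := by
  unfold coord
  split_ifs <;> simp [Finset.sum_apply]

theorem pr_apply {n : ℕ} (a b : ℕ) (x : Fin n → ℂ) (i : Fin n) :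
    pr n a b x i = if a ≤ (i : ℕ) + 1 ∧ (i : ℕ) + 1 ≤ b then 0 else x i := by
  rw [pr, LinearMap.pi_apply]
  split_ifs <;> rfl

theorem coord_pr {n : ℕ} (a b l : ℕ) (x : Fin n → ℂ) :
    coord l (pr n a b x) = if l ∈ Icc a b then 0 else coord l x := by
  unfold coord
  by_cases hl : 1 ≤ l ∧ l ≤ n
  · simp only [dif_pos hl, pr_apply, Nat.sub_add_cancel hl.1, mem_Icc]
  · simp only [dif_neg hl, ite_self]

theorem pluck_extend {n d : ℕ} {κ : Type*} (w : Fin d → Fin n → ℂ) (r : κ → Fin d) (g : κ → ℕ)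
    (L : Fin d → ℕ) :
    pluck w (extend r g L) =
      det ((of fun s t => coord (L s) (w t)).updateRows r fun i t => coord (g i) (w t)) :=
  congrArg det <| congrArg of <| funext fun s => apply_extend (fun l t => coord l (w t)) r L s

section PluckerForm

variable {n p q k : ℕ}

noncomputable def pluckerForm (hk : k ≤ q) (wq : Fin q → Fin n → ℂ) (J : Fin q → ℕ)
    (C : Matrix (Fin p) (Fin q) ℂ) : (Fin p → ℂ) [⋀^Fin k]→ₗ[ℂ] ℂ :=
  (detRowAlternating.compExtend (Fin.castLE_injective hk)
    (of fun t j => coord (J t) (wq j))).compLinearMap C.vecMulLinear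

theorem pluckerForm_apply (hk : k ≤ q) (wq : Fin q → Fin n → ℂ) (J : Fin q → ℕ)
    (C : Matrix (Fin p) (Fin q) ℂ) (y : Fin k → Fin p → ℂ) :
    pluckerForm hk wq J C y =
      det ((of fun t j => coord (J t) (wq j)).updateRows (Fin.castLE hk) fun i => y i ᵥ* C) :=
  rfl

theorem continuous_pluckerForm (hk : k ≤ q) (wq : Fin q → Fin n → ℂ) (J : Fin q → ℕ)
    (C : Matrix (Fin p) (Fin q) ℂ) : Continuous (pluckerForm hk wq J C) := by
  simp only [funext (pluckerForm_apply hk wq J C)]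
  exact (continuous_const.matrix_updateRows _ (by fun_prop)).matrix_det

theorem pluckerForm_apply_coord {wp : Fin p → Fin n → ℂ} {wq : Fin q → Fin n → ℂ}
    {C : Matrix (Fin p) (Fin q) ℂ} (hC : ∀ j, ∑ s, C s j • wp s = pr n (q + 1) p (wq j))
    (hk : k ≤ q) (J : Fin q → ℕ) (l : Fin k → ℕ) :
    pluckerForm hk wq J C (fun i s => coord (l i) (wp s)) =
      if ∀ i, l i ∉ Icc (q + 1) p then pluck wq (extend (Fin.castLE hk) l J) else 0 := by
  have hrow (m : ℕ) : (fun s => coord m (wp s)) ᵥ* C =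
      if m ∈ Icc (q + 1) p then 0 else fun j => coord m (wq j) := by
    ext j
    simp only [vecMul, dotProduct, mul_comm (coord m _), ← coord_sum_smul, hC, coord_pr]
    split_ifs <;> rfl
  split_ifs with hl
  · rw [pluck_extend, pluckerForm_apply]
    congr 2
    funext i
    rw [hrow, if_neg (hl i)]
  · push Not at hl
    obtain ⟨i, hi⟩ := hl
    rw [pluckerForm, AlternatingMap.compLinearMap_apply]
    exact AlternatingMap.map_coord_zero _ i (by simp only [vecMulLinear_apply, hrow, if_pos hi])

end PluckerForm

theorem degenerate_plucker_relations_general (n p q : ℕ)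
    (Wq Wp : Submodule ℂ (Fin n → ℂ))
    (hpr : Submodule.map (pr n (q + 1) p) Wq ≤ Wp)
    (wq : Fin q → (Fin n → ℂ)) (wp : Fin p → (Fin n → ℂ))
    (hwq' : Submodule.span ℂ (Set.range wq) = Wq)
    (hwp' : Submodule.span ℂ (Set.range wp) = Wp)
    (k : ℕ) (hk : k ≤ q)
    (L : Fin p → ℕ) (J : Fin q → ℕ) :
    DegRel n p q k hk wp wq L J := by
  subst hwq' hwp'
  obtain ⟨C, hC⟩ := Submodule.exists_sum_smul_eq_of_map_span_le _ hpr
  have key := (pluckerForm hk wq J C).det_smul_apply_eq_sum_updateRows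
    (continuous_pluckerForm hk wq J C) (of fun s t => coord (L s) (wp t))
    (fun i t => coord (J (Fin.castLE hk i)) (wp t))
  rw [pluckerForm_apply_coord hC, (Fin.castLE_injective hk).extend_comp_self] at key
  refine Eq.trans ?_ (key.trans (sum_congr rfl fun r _ => ?_))
  · split_ifs <;> simp only [pluck, smul_eq_mul, one_mul, zero_mul, mul_zero]
  · erw [pluckerForm_apply_coord hC hk J fun i => L (r i)]
    rw [← pluck_extend, Fin.extend_castLE]
    by_cases hr : StrictMono r
    · by_cases hL : ∀ i, L (r i) ∉ Icc (q + 1) p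
      · rw [if_pos hr, if_pos hL, if_pos ⟨hr, hL⟩, smul_eq_mul]
        congr 2
        funext s
        rw [extend_def]
      · rw [if_pos hr, if_neg hL, if_neg fun h => hL h.2, smul_zero]
    · rw [if_neg hr, if_neg fun h => hr h.1]

/-- Let `1 ≤ q ≤ p ≤ n` and let `W_q, W_p ⊆ ℂⁿ` with `dim W_q = q`,
`dim W_p = p` and `pr_{q+1,p}(W_q) ⊆ W_p`. Then for every `1 ≤ k ≤ q` and all
tuples `L` of length `p` and `J` of length `q` with entries in `{1, …, n}`, the
degenerate Plücker relation `R^{k;a}_{L,J}` vanishes on `(W_p, W_q)`. -/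
theorem degenerate_plucker_relations (n p q : ℕ) (hq : 1 ≤ q) (hqp : q ≤ p) (hpn : p ≤ n)
    (Wq Wp : Submodule ℂ (Fin n → ℂ))
    (hWq : Module.finrank ℂ Wq = q) (hWp : Module.finrank ℂ Wp = p)
    (hpr : Submodule.map (pr n (q + 1) p) Wq ≤ Wp)
    (wq : Fin q → (Fin n → ℂ)) (wp : Fin p → (Fin n → ℂ))
    (hwq : LinearIndependent ℂ wq) (hwq' : Submodule.span ℂ (Set.range wq) = Wq)
    (hwp : LinearIndependent ℂ wp) (hwp' : Submodule.span ℂ (Set.range wp) = Wp)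
    (k : ℕ) (hk1 : 1 ≤ k) (hk : k ≤ q)
    (L : Fin p → ℕ) (J : Fin q → ℕ)
    (hL : ∀ a, L a ∈ Finset.Icc 1 n) (hJ : ∀ b, J b ∈ Finset.Icc 1 n) :
    DegRel n p q k hk wp wq L J :=
  degenerate_plucker_relations_general n p q Wq Wp hpr wq wp hwq' hwp' k hk L J
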